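/- Let S be a left cancellative monoid and R a ring with a finite S-grading of support size d. If R_e is nil of index 2 (a² = 0 for all a ∈ R_e) and R_e has no 2-torsion (characteristic of R_e ≠ 2), then (R_e)³ = 0 and R is nilpotent with nd(R) ≤ 3d. -/

import Mathlib

/-- Product `a * l₀ * l₁ * ⋯` of a nonempty list of ring elements. -/
def mulList {R : Type*} [Mul R] (a : R) (l : List R) : R := l.foldl (· * ·) a

/-- `pw a n` is `aⁿ` for `n ≥ 1` (junk value `0` at `n = 0`). -/
def pw {R : Type*} [Mul R] [Zero R] (a : R) : ℕ → R
  | 0 => 0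
  | 1 => a
  | n + 2 => pw a (n + 1) * a

/-- Product of `n` elements given by `f` (junk `0` when `n = 0`). -/
def finProd {R : Type*} [Mul R] [Zero R] : {n : ℕ} → (Fin n → R) → R
  | 0, _ => 0
  | n + 1, f => mulList (f 0) (List.ofFn fun i : Fin n => f i.succ)

/-- `R ^ n = 0`: every product of `n` elements of `R` vanishes. -/
def PowZero (R : Type*) [Mul R] [Zero R] (n : ℕ) : Prop :=
  ∀ (a : R) (l : List R), l.length + 1 = n → mulList a l = 0

/-- `T ^ n = 0` for a subset `T` of a ring. -/
def PowZeroOn {R : Type*} [Mul R] [Zero R] (T : Set R) (n : ℕ) : Prop :=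
  ∀ (a : R) (l : List R), a ∈ T → (∀ x ∈ l, x ∈ T) → l.length + 1 = n → mulList a l = 0

/-- `a` is nilpotent: `aⁿ = 0` for some `n ≥ 1`. -/
def IsNilE {R : Type*} [Mul R] [Zero R] (a : R) : Prop := ∃ n, 1 ≤ n ∧ pw a n = 0

/-- A nil ring: every element is nilpotent. -/
def IsNilRing (R : Type*) [Mul R] [Zero R] : Prop := ∀ a : R, IsNilE a

/-- An `S`-grading of the ring `R`: a direct sum decomposition into additive
subgroups with `R_g R_h ⊆ R_{gh}`. -/
structure IsGrading {S R : Type*} [Monoid S] [NonUnitalRing R] [DecidableEq S]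
    (A : S → AddSubgroup R) : Prop where
  mul_mem : ∀ {g h : S} {x y : R}, x ∈ A g → y ∈ A h → x * y ∈ A (g * h)
  isInternal : DirectSum.IsInternal A

/-- Grading by an additively written monoid. -/
structure IsAddGrading {S R : Type*} [AddMonoid S] [NonUnitalRing R] [DecidableEq S]
    (A : S → AddSubgroup R) : Prop where
  mul_mem : ∀ {g h : S} {x y : R}, x ∈ A g → y ∈ A h → x * y ∈ A (g + h)
  isInternal : DirectSum.IsInternal A

/-- The subset `T` of a ring is `f`-commutative: there are a semigroup `G` acting on it
from the left and a map `f` with `a*b = f(a,b)·(b*a)`. -/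
def IsFCommutativeOn {R : Type*} [Mul R] (T : Set R) : Prop :=
  ∃ (G : Type) (_ : Semigroup G) (act : G → R → R),
    (∀ l m : G, ∀ x : R, x ∈ T → act (l * m) x = act l (act m x)) ∧
    (∀ l : G, ∀ x : R, x ∈ T → act l x ∈ T) ∧
    (∀ l : G, ∀ x y : R, x ∈ T → y ∈ T → act l (x * y) = act l x * y) ∧
    ∃ f : R → R → G, ∀ a b : R, a ∈ T → b ∈ T → a * b = act (f a b) (b * a)

/-- The ring `R` is `f`-commutative. -/
def IsFCommutative (R : Type*) [Mul R] : Prop :=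
  ∃ (G : Type) (_ : Semigroup G) (act : G → R → R),
    (∀ l m : G, ∀ x : R, act (l * m) x = act l (act m x)) ∧
    (∀ l : G, ∀ x y : R, act l (x * y) = act l x * y) ∧
    ∃ f : R → R → G, ∀ a b : R, a * b = act (f a b) (b * a)

/-- The order of `g`: least `n ≥ 1` with `gⁿ = 1`, and `0` if no such `n` exists. -/
noncomputable def ordOf {S : Type*} [Monoid S] (g : S) : ℕ := sInf {n | 1 ≤ n ∧ g ^ n = 1}

/-!
In a ring with `x * x = 0` for all `x`, expanding `(x + y)² = 0` gives anticommutativity, and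
moving `c` around `a * b * c` by anticommutativity returns `-(a * b * c)`; without 2-torsion this
forces `a * b * c = 0`. Hence `R_e³ = 0`.

For the whole ring it suffices, by additivity in each factor, to kill products of homogeneous
elements. If such a product `x₀ ⋯ xₙ` is nonzero, so are its prefix products, whose degrees thus
lie in the support. When two prefixes have the same degree, left cancellation makes the factor
between them a product of degree `e`, i.e. an element of `R_e`. If `R_e^k = 0`, a degree can
therefore occur for at most `k` prefixes, and the degree `e` for at most `k - 1`; counting the
prefixes gives `n + 1 < k d`. If `R_e = 0`, no degree occurs twice, and `k ≥ 2` gives the same.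
-/

section MulList

variable {R : Type*}

theorem mulList_cons [Mul R] (a x : R) (l : List R) :
    mulList a (x :: l) = mulList (a * x) l := rfl

theorem mulList_append [Mul R] (a : R) (l₁ l₂ : List R) :
    mulList a (l₁ ++ l₂) = mulList (mulList a l₁) l₂ :=
  List.foldl_append

theorem mulList_cons_eq_mul [Semigroup R] (a x : R) (l : List R) :
    mulList a (x :: l) = a * mulList x l := by
  induction l generalizing a x with
  | nil => rfl
  | cons y l ih => rw [mulList_cons, ih, ih, mul_assoc]

theorem zero_mulList [MulZeroClass R] (l : List R) : mulList 0 l = 0 := by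
  induction l with
  | nil => rfl
  | cons x l ih => rwa [mulList_cons, zero_mul]

theorem add_mulList [NonUnitalNonAssocSemiring R] (a b : R) (l : List R) :
    mulList (a + b) l = mulList a l + mulList b l := by
  induction l generalizing a b with
  | nil => rfl
  | cons x l ih => rw [mulList_cons, add_mul, ih]; rfl

theorem mulList_eq_zero_of_take [MulZeroClass R] {a : R} {l : List R} (i : ℕ)
    (h : mulList a (l.take i) = 0) : mulList a l = 0 := by
  rw [← List.take_append_drop i l, mulList_append, h, zero_mulList]

end MulList

section SquareZero

variable {R : Type*} [NonUnitalRing R]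

theorem mul_eq_neg_mul_of_mul_self_eq_zero (h : ∀ x : R, x * x = 0) (a b : R) :
    a * b = -(b * a) := by
  have hab := h (a + b)
  rw [add_mul, mul_add, mul_add, h a, h b, zero_add, add_zero] at hab
  exact eq_neg_of_add_eq_zero_left hab

theorem mul_mul_eq_zero_of_mul_self_eq_zero (h : ∀ x : R, x * x = 0)
    (htor : ∀ x : R, x + x = 0 → x = 0) (a b c : R) : a * b * c = 0 := by
  have anti := mul_eq_neg_mul_of_mul_self_eq_zero h
  refine htor _ (add_eq_zero_iff_eq_neg.2 ?_)
  calc a * b * c = -(c * (a * b)) := anti _ _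
    _ = b * (c * a) := by rw [← mul_assoc, anti (c * a), neg_neg]
    _ = -(a * (b * c)) := by rw [← mul_assoc, anti]
    _ = -(a * b * c) := by rw [mul_assoc]

theorem NonUnitalSubring.powZeroOn_three_of_mul_self_eq_zero (T : NonUnitalSubring R)
    (h2 : ∀ a ∈ T, a * a = 0) (htor : ∀ x ∈ T, x + x = 0 → x = 0) :
    PowZeroOn (T : Set R) 3 := by
  intro a l ha hl hlen
  obtain ⟨b, c, rfl⟩ : ∃ b c, l = [b, c] := by
    match l, hlen with
    | [b, c], _ => exact ⟨b, c, rfl⟩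
  have habc := mul_mul_eq_zero_of_mul_self_eq_zero (R := T)
    (fun x => Subtype.ext (h2 x x.2)) (fun x hx => Subtype.ext (htor x x.2 congr($hx.1)))
    ⟨a, ha⟩ ⟨b, hl b (by simp)⟩ ⟨c, hl c (by simp)⟩
  exact congr($habc.1)

end SquareZero

theorem DirectSum.IsInternal.addSubgroup_induction {ι R : Type*} [DecidableEq ι]
    [AddCommGroup R] {A : ι → AddSubgroup R} (hA : DirectSum.IsInternal A) {p : R → Prop}
    (mem : ∀ i, ∀ x ∈ A i, p x) (zero : p 0) (add : ∀ x y, p x → p y → p (x + y)) (x : R) :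
    p x := by
  obtain ⟨v, rfl⟩ := hA.2 x
  induction v using DirectSum.induction_on with
  | zero => simpa using zero
  | of i y => simpa using mem i y y.2
  | add v w hv hw => rw [map_add]; exact add _ _ hv hw

theorem powZero_of_isHomogeneousElem {ι R : Type*} [DecidableEq ι] [NonUnitalRing R]
    {A : ι → AddSubgroup R} (hA : DirectSum.IsInternal A) {n : ℕ}
    (h : ∀ (a : R) (l : List R), SetLike.IsHomogeneousElem A a →
      (∀ x ∈ l, SetLike.IsHomogeneousElem A x) → l.length + 1 = n → mulList a l = 0) :
    PowZero R n := by
  have hsuffix : ∀ (l bs : List R) (a : R), SetLike.IsHomogeneousElem A a →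
      (∀ x ∈ bs, SetLike.IsHomogeneousElem A x) → bs.length + l.length + 1 = n →
      mulList a (bs ++ l) = 0 := by
    intro l
    induction l with
    | nil => intro bs a ha hbs hlen; simpa using h a bs ha hbs (by simpa using hlen)
    | cons x l ih =>
      intro bs a ha hbs hlen
      simp only [List.length_cons] at hlen
      rw [mulList_append, mulList_cons]
      induction x using hA.addSubgroup_induction with
      | mem i x hx =>
        have hbsx : ∀ y ∈ bs ++ [x], SetLike.IsHomogeneousElem A y := by
          simp only [List.mem_append, List.mem_singleton]
          rintro y (hy | rfl)
          exacts [hbs y hy, ⟨i, hx⟩]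
        have hx' := ih (bs ++ [x]) a ha hbsx
          (by simp only [List.length_append, List.length_singleton]; omega)
        rwa [List.append_assoc, mulList_append, mulList_append] at hx'
      | zero => rw [mul_zero, zero_mulList]
      | add x y hx hy => rw [mul_add, add_mulList, hx, hy, add_zero]
  intro a l hlen
  induction a using hA.addSubgroup_induction with
  | mem i a ha => simpa using hsuffix l [] a ⟨i, ha⟩ (by simp) (by simpa using hlen)
  | zero => exact zero_mulList l
  | add a b ha hb => rw [add_mulList, ha, hb, add_zero]

section Graded

open Finset

variable {S R : Type*} [Monoid S] [NonUnitalRing R] {A : S → AddSubgroup R}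
  {deg : R → S} {g : S} {a : R} {l : List R}

theorem mulList_mem (hmul : ∀ {g h : S} {x y : R}, x ∈ A g → y ∈ A h → x * y ∈ A (g * h))
    (ha : a ∈ A g) (hl : ∀ x ∈ l, x ∈ A (deg x)) :
    mulList a l ∈ A (g * (l.map deg).prod) := by
  induction l generalizing a g with
  | nil => rw [List.map_nil, List.prod_nil, mul_one]; exact ha
  | cons x l ih =>
    rw [mulList_cons, List.map_cons, List.prod_cons, ← mul_assoc]
    exact ih (hmul ha (hl x (by simp))) fun y hy => hl y (by simp [hy])

theorem exists_mem_one_mulList_take_eq_mul [IsLeftCancelMul S]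
    (hmul : ∀ {g h : S} {x y : R}, x ∈ A g → y ∈ A h → x * y ∈ A (g * h))
    (hl : ∀ x ∈ l, x ∈ A (deg x)) {i j : ℕ} (hij : i < j) (hj : j ≤ l.length)
    (hdeg : g * ((l.take i).map deg).prod = g * ((l.take j).map deg).prod) :
    ∃ u ∈ A 1, mulList a (l.take j) = mulList a (l.take i) * u := by
  obtain ⟨x, seg, hseg⟩ : ∃ x seg, (l.drop i).take (j - i) = x :: seg :=
    List.exists_cons_of_ne_nil <| by
      simp only [ne_eq, List.take_eq_nil_iff, List.drop_eq_nil_iff]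
      omega
  have htake : l.take j = l.take i ++ x :: seg := by
    rw [← hseg, ← List.take_add, Nat.add_sub_cancel' hij.le]
  have hseg_one : ((x :: seg).map deg).prod = 1 := by
    refine mul_left_cancel (a := g * ((l.take i).map deg).prod) ?_
    rw [mul_one, mul_assoc, ← List.prod_append, ← List.map_append, ← htake, hdeg]
  have hsub : ∀ y ∈ x :: seg, y ∈ l := fun y hy =>
    List.mem_of_mem_drop (List.mem_of_mem_take (hseg ▸ hy))
  refine ⟨mulList x seg, ?_, by rw [htake, mulList_append, mulList_cons_eq_mul]⟩
  have hmem := mulList_mem hmul (hl x (hsub x List.mem_cons_self))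
    fun y hy => hl y (hsub y (List.mem_cons_of_mem x hy))
  rwa [← List.prod_cons, ← List.map_cons, hseg_one] at hmem

theorem exists_mulList_take_eq_of_strictMono [IsLeftCancelMul S]
    (hmul : ∀ {g h : S} {x y : R}, x ∈ A g → y ∈ A h → x * y ∈ A (g * h))
    (hl : ∀ x ∈ l, x ∈ A (deg x)) {s : S} :
    ∀ {m : ℕ} (idx : Fin (m + 1) → ℕ), StrictMono idx → idx (Fin.last m) ≤ l.length →
      (∀ t, g * ((l.take (idx t)).map deg).prod = s) →
      ∃ us : List R, (∀ u ∈ us, u ∈ A 1) ∧ us.length = m ∧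
        mulList a (l.take (idx (Fin.last m))) = mulList (mulList a (l.take (idx 0))) us
  | 0, idx, _, _, _ => ⟨[], by simp, rfl, rfl⟩
  | m + 1, idx, hmono, hle, hdeg => by
    have hlt : idx (Fin.last m).castSucc < idx (Fin.last (m + 1)) :=
      hmono (Fin.castSucc_lt_last _)
    obtain ⟨us, hus, hlen, hprefix⟩ := exists_mulList_take_eq_of_strictMono hmul hl
      (idx ∘ Fin.castSucc) (hmono.comp Fin.strictMono_castSucc) (hlt.le.trans hle) fun _ => hdeg _
    obtain ⟨u, hu, hstep⟩ := exists_mem_one_mulList_take_eq_mul (a := a) hmul hl hlt hle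
      ((hdeg _).trans (hdeg _).symm)
    refine ⟨us ++ [u], ?_, by simp [hlen], ?_⟩
    · simp only [List.mem_append, List.mem_singleton]
      rintro v (hv | rfl)
      exacts [hus v hv, hu]
    · simp only [Function.comp_apply, Fin.castSucc_zero] at hprefix
      rw [hstep, mulList_append, ← hprefix]
      rfl

theorem exists_mulList_take_ne_zero_of_lt_card_filter [DecidableEq S] [IsLeftCancelMul S]
    (hmul : ∀ {g h : S} {x y : R}, x ∈ A g → y ∈ A h → x * y ∈ A (g * h))
    (hl : ∀ x ∈ l, x ∈ A (deg x)) (hne : mulList a l ≠ 0) {s : S} {c : ℕ}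
    (hc : c < #{i ∈ range (l.length + 1) | g * ((l.take i).map deg).prod = s}) :
    ∃ i, g * ((l.take i).map deg).prod = s ∧ ∃ us : List R, (∀ u ∈ us, u ∈ A 1) ∧
      us.length = c ∧ mulList (mulList a (l.take i)) us ≠ 0 := by
  set I := {i ∈ range (l.length + 1) | g * ((l.take i).map deg).prod = s}
  let idx : Fin (c + 1) → ℕ := fun t => I.orderEmbOfFin rfl (Fin.castLE hc t)
  have hI : ∀ t, idx t ∈ I := fun t => I.orderEmbOfFin_mem rfl _
  obtain ⟨us, hus, hlen, hprefix⟩ := exists_mulList_take_eq_of_strictMono (a := a) hmul hl idx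
    ((I.orderEmbOfFin rfl).strictMono.comp (Fin.strictMono_castLE hc))
    (Nat.lt_succ_iff.1 (mem_range.1 (mem_filter.1 (hI _)).1)) fun t => (mem_filter.1 (hI t)).2
  refine ⟨idx 0, (mem_filter.1 (hI 0)).2, us, hus, hlen, ?_⟩
  rw [← hprefix]
  exact fun h => hne (mulList_eq_zero_of_take _ h)

theorem card_filter_le_of_powZeroOn [DecidableEq S] [IsLeftCancelMul S]
    (hmul : ∀ {g h : S} {x y : R}, x ∈ A g → y ∈ A h → x * y ∈ A (g * h))
    (hl : ∀ x ∈ l, x ∈ A (deg x)) (hne : mulList a l ≠ 0) {m : ℕ}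
    (hA1 : PowZeroOn (A 1 : Set R) (m + 1)) (s : S) :
    #{i ∈ range (l.length + 1) | g * ((l.take i).map deg).prod = s} ≤ m + 1 := by
  by_contra! hc
  obtain ⟨i, -, us, hus, hlen, hne'⟩ :=
    exists_mulList_take_ne_zero_of_lt_card_filter hmul hl hne hc
  obtain ⟨u, us, rfl⟩ := List.exists_cons_of_length_eq_add_one hlen
  rw [mulList_cons_eq_mul, hA1 u us (hus u (by simp)) (fun v hv => hus v (by simp [hv]))
    (by simpa using hlen), mul_zero] at hne'
  exact hne' rfl

theorem card_filter_eq_one_le_of_powZeroOn [DecidableEq S] [IsLeftCancelMul S]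
    (hmul : ∀ {g h : S} {x y : R}, x ∈ A g → y ∈ A h → x * y ∈ A (g * h))
    (ha : a ∈ A g) (hl : ∀ x ∈ l, x ∈ A (deg x)) (hne : mulList a l ≠ 0) {m : ℕ}
    (hA1 : PowZeroOn (A 1 : Set R) (m + 1)) :
    #{i ∈ range (l.length + 1) | g * ((l.take i).map deg).prod = 1} ≤ m := by
  by_contra! hc
  obtain ⟨i, hi, us, hus, hlen, hne'⟩ :=
    exists_mulList_take_ne_zero_of_lt_card_filter hmul hl hne hc
  have hmem := mulList_mem (l := l.take i) hmul ha fun x hx => hl x (List.mem_of_mem_take hx)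
  rw [hi] at hmem
  exact hne' (hA1 _ us hmem hus (by omega))

theorem length_add_one_lt_of_mulList_ne_zero [IsLeftCancelMul S]
    (hmul : ∀ {g h : S} {x y : R}, x ∈ A g → y ∈ A h → x * y ∈ A (g * h))
    (supp : Finset S) (hsupp : ∀ g, A g ≠ ⊥ → g ∈ supp) {k : ℕ} (hk : 2 ≤ k)
    (hA1 : PowZeroOn (A 1 : Set R) k) (ha : a ∈ A g) (hl : ∀ x ∈ l, x ∈ A (deg x))
    (hne : mulList a l ≠ 0) : l.length + 1 < k * #supp := by
  classical
  have hmaps :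
      Set.MapsTo (fun i => g * ((l.take i).map deg).prod) (range (l.length + 1)) supp :=
    fun i _ => hsupp _ fun hbot => hne <| mulList_eq_zero_of_take i <| by
      have hmem :=
        mulList_mem (l := l.take i) hmul ha fun x hx => hl x (List.mem_of_mem_take hx)
      rwa [hbot, AddSubgroup.mem_bot] at hmem
  have hcount := card_eq_sum_card_fiberwise hmaps
  rw [card_range] at hcount
  obtain ⟨m, rfl⟩ : ∃ m, k = m + 1 + 1 := ⟨k - 2, by omega⟩
  by_cases h1 : (1 : S) ∈ supp
  · calc l.length + 1 = _ := hcount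
      _ < ∑ _t ∈ supp, (m + 1 + 1) :=
        sum_lt_sum (fun t _ => card_filter_le_of_powZeroOn hmul hl hne hA1 t)
          ⟨1, h1, (card_filter_eq_one_le_of_powZeroOn hmul ha hl hne hA1).trans_lt (by omega)⟩
      _ = (m + 1 + 1) * #supp := by rw [sum_const, smul_eq_mul, mul_comm]
  · have hbot : A 1 = ⊥ := not_not.1 fun h => h1 (hsupp 1 h)
    have hA1' : PowZeroOn (A 1 : Set R) (0 + 1) := fun b l' hb _ hlen => by
      obtain rfl := List.eq_nil_of_length_eq_zero (by omega : l'.length = 0)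
      exact AddSubgroup.mem_bot.1 (hbot ▸ hb)
    have hle : l.length + 1 ≤ #supp := by
      calc l.length + 1 = _ := hcount
        _ ≤ ∑ _t ∈ supp, 1 :=
          sum_le_sum fun t _ => card_filter_le_of_powZeroOn hmul hl hne hA1' t
        _ = #supp := by rw [sum_const, smul_eq_mul, mul_one]
    nlinarith

theorem mulList_eq_zero_of_isHomogeneousElem [IsLeftCancelMul S]
    (hmul : ∀ {g h : S} {x y : R}, x ∈ A g → y ∈ A h → x * y ∈ A (g * h))
    (supp : Finset S) (hsupp : ∀ g, A g ≠ ⊥ → g ∈ supp) {k : ℕ} (hk : 2 ≤ k)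
    (hA1 : PowZeroOn (A 1 : Set R) k) (ha : SetLike.IsHomogeneousElem A a)
    (hl : ∀ x ∈ l, SetLike.IsHomogeneousElem A x) (hlen : l.length + 1 = k * #supp) :
    mulList a l = 0 := by
  classical
  obtain ⟨g, ha⟩ := ha
  choose deg hdeg using fun x : R =>
    if hx : x ∈ l then (hl x hx).imp fun _ hg _ => hg else ⟨1, fun h => absurd h hx⟩
  by_contra hne
  exact (length_add_one_lt_of_mulList_ne_zero (deg := deg) hmul supp hsupp hk hA1 ha
    (fun x hx => hdeg x hx) hne).ne hlen

theorem IsGrading.powZero_mul_card [DecidableEq S] [IsLeftCancelMul S] (hA : IsGrading A)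
    (supp : Finset S) (hsupp : ∀ g, A g ≠ ⊥ → g ∈ supp) {k : ℕ} (hk : 2 ≤ k)
    (hA1 : PowZeroOn (A 1 : Set R) k) : PowZero R (k * #supp) :=
  powZero_of_isHomogeneousElem hA.isInternal fun _ _ ha hl hlen =>
    mulList_eq_zero_of_isHomogeneousElem hA.mul_mem supp hsupp hk hA1 ha hl hlen

end Graded

theorem stmt_13 {S R : Type*} [Monoid S] [IsLeftCancelMul S] [DecidableEq S]
    [NonUnitalRing R] (A : S → AddSubgroup R) (hA : IsGrading A)
    (d : ℕ) (hfin : {g : S | A g ≠ ⊥}.Finite) (hcard : hfin.toFinset.card = d)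
    (h2 : ∀ a ∈ A 1, a * a = 0) (htor : ∀ x ∈ A 1, x + x = 0 → x = 0) :
    PowZeroOn (A 1 : Set R) 3 ∧ PowZero R (3 * d) := by
  let R₁ : NonUnitalSubring R :=
    { A 1 with mul_mem' := fun hx hy => by simpa using hA.mul_mem hx hy }
  have hA1 : PowZeroOn (A 1 : Set R) 3 := R₁.powZeroOn_three_of_mul_self_eq_zero h2 htor
  refine ⟨hA1, ?_⟩
  rw [← hcard]
  exact hA.powZero_mul_card hfin.toFinset (fun g hg => hfin.mem_toFinset.2 hg) (by norm_num) hA1
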